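/- (Fixed-support barycenter via unbalanced multi-marginal GW, two-marginal case.) Let X₁, X₂ be compact mm-spaces, (S,d) a compact metric space, and ρ₁, ρ₂ ≥ 0 with ρ₁ + ρ₂ = 1. Let π* minimize ∬ [ρ₁|d₁(x₁,x₁') − d(s,s')|² + ρ₂|d₂(x₂,x₂') − d(s,s')|²] dπ dπ over probability measures π on X₁ × X₂ × S whose (X₁,X₂)-marginal lies in Π(μ₁,μ₂) (last marginal free). Then σ* = (P_S)_# π* minimizes σ ↦ ρ₁ GW((S,d,σ), X₁)² + ρ₂ GW((S,d,σ), X₂)² over σ ∈ P(S). -/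

import Mathlib

open MeasureTheory Filter Topology

/-- The Gromov–Wasserstein cost of a plan `π` on `X × Y`. -/
noncomputable def gwCost {X Y : Type*} [PseudoMetricSpace X] [PseudoMetricSpace Y]
    [MeasurableSpace X] [MeasurableSpace Y] (π : Measure (X × Y)) : ℝ :=
  ∫ p, ∫ q, (dist p.1 q.1 - dist p.2 q.2) ^ 2 ∂π ∂π

/-- `π` is a coupling of `μ` and `ν`. -/
def IsCoupling {X Y : Type*} [MeasurableSpace X] [MeasurableSpace Y]
    (π : Measure (X × Y)) (μ : Measure X) (ν : Measure Y) : Prop :=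
  π.map Prod.fst = μ ∧ π.map Prod.snd = ν

/-- The squared Gromov–Wasserstein distance. -/
noncomputable def gwSq {X Y : Type*} [PseudoMetricSpace X] [PseudoMetricSpace Y]
    [MeasurableSpace X] [MeasurableSpace Y] (μ : Measure X) (ν : Measure Y) : ℝ :=
  sInf {c | ∃ π : Measure (X × Y), IsCoupling π μ ν ∧ c = gwCost π}

/-- `π` is an optimal Gromov–Wasserstein plan between `μ` and `ν`. -/
def IsOptGW {X Y : Type*} [PseudoMetricSpace X] [PseudoMetricSpace Y]
    [MeasurableSpace X] [MeasurableSpace Y]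
    (π : Measure (X × Y)) (μ : Measure X) (ν : Measure Y) : Prop :=
  IsCoupling π μ ν ∧ gwCost π = gwSq μ ν

/-- The LGW objective of a three-plan on `S × X × Y`:
`∬ |d_X(x,x') − d_Y(y,y')|² dπ dπ`. -/
noncomputable def lgwCost {S X Y : Type*} [PseudoMetricSpace X] [PseudoMetricSpace Y]
    [MeasurableSpace S] [MeasurableSpace X] [MeasurableSpace Y]
    (π : Measure (S × X × Y)) : ℝ :=
  ∫ p, ∫ q, (dist p.2.1 q.2.1 - dist p.2.2 q.2.2) ^ 2 ∂π ∂π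

/-- The linear Gromov–Wasserstein value with reference `(S, σ)`:
infimum of the LGW objective over three-plans whose `(S,X)`- and `(S,Y)`-marginals
are optimal GW plans. -/
noncomputable def lgw {S X Y : Type*} [PseudoMetricSpace S] [PseudoMetricSpace X]
    [PseudoMetricSpace Y] [MeasurableSpace S] [MeasurableSpace X] [MeasurableSpace Y]
    (σ : Measure S) (μ : Measure X) (ν : Measure Y) : ℝ :=
  sInf {c | ∃ π : Measure (S × X × Y),
    IsOptGW (π.map (fun p => (p.1, p.2.1))) σ μ ∧
    IsOptGW (π.map (fun p => (p.1, p.2.2))) σ ν ∧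
    c = lgwCost π}

/-! The objective of a three-plan `π` on `X₁ × X₂ × S` splits as `ρ₁` times the GW cost of its
`(S, X₁)`-marginal plus `ρ₂` times that of its `(S, X₂)`-marginal. For `π*` these marginals
couple `σ* = (P_S)_# π*` with `μ₁` and `μ₂`, so the barycenter objective at `σ*` is at most the
optimal three-plan value. Conversely, couplings of any `σ` with `μ₁` and `μ₂` glue, by
disintegrating both over `S` and taking the conditional product, into an admissible three-plan with
these two marginals, so the optimal value is at most the barycenter objective at `σ`. -/

open ProbabilityTheory

section IteratedIntegral

variable {Z W : Type*} [MeasurableSpace Z] [MeasurableSpace W]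

theorem integral_integral_map (π : Measure Z) [SFinite π] {f : Z → W} (hf : Measurable f)
    {c : W × W → ℝ} (hc : StronglyMeasurable c) :
    ∫ p, ∫ q, c (p, q) ∂π.map f ∂π.map f = ∫ p, ∫ q, c (f p, f q) ∂π ∂π := by
  rw [integral_map hf.aemeasurable hc.integral_prod_right'.aestronglyMeasurable]
  refine integral_congr_ae (ae_of_all _ fun p => ?_)
  exact integral_map hf.aemeasurable
    (hc.comp_measurable measurable_prodMk_left).aestronglyMeasurable

variable [MetricSpace Z] [CompactSpace Z] [BorelSpace Z] (π : Measure Z) [IsFiniteMeasure π]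

theorem integral_integral_eq_integral_prod {F : Z × Z → ℝ} (hF : Continuous F) :
    ∫ p, ∫ q, F (p, q) ∂π ∂π = ∫ z, F z ∂π.prod π :=
  (integral_prod F (hF.integrable_of_hasCompactSupport (.of_compactSpace F))).symm

theorem integral_integral_add {F G : Z × Z → ℝ} (hF : Continuous F) (hG : Continuous G) :
    ∫ p, ∫ q, (F (p, q) + G (p, q)) ∂π ∂π =
      (∫ p, ∫ q, F (p, q) ∂π ∂π) + ∫ p, ∫ q, G (p, q) ∂π ∂π := by
  rw [integral_integral_eq_integral_prod π (F := fun z => F z + G z) (hF.add hG),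
    integral_integral_eq_integral_prod π hF, integral_integral_eq_integral_prod π hG]
  exact integral_add (hF.integrable_of_hasCompactSupport (.of_compactSpace F))
    (hG.integrable_of_hasCompactSupport (.of_compactSpace G))

end IteratedIntegral

section Coupling

variable {Z X Y : Type*} [MeasurableSpace Z] [MeasurableSpace X] [MeasurableSpace Y]

theorem isCoupling_prod (μ : Measure X) (ν : Measure Y) [IsProbabilityMeasure μ]
    [IsProbabilityMeasure ν] : IsCoupling (μ.prod ν) μ ν :=
  ⟨Measure.fst_prod, Measure.snd_prod⟩

theorem isCoupling_map_prodMk_iff {π : Measure Z} {f : Z → X} {g : Z → Y} (hf : Measurable f)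
    (hg : Measurable g) {μ : Measure X} {ν : Measure Y} :
    IsCoupling (π.map fun z => (f z, g z)) μ ν ↔ π.map f = μ ∧ π.map g = ν := by
  rw [IsCoupling, Measure.map_map measurable_fst (hf.prodMk hg),
    Measure.map_map measurable_snd (hf.prodMk hg)]
  rfl

theorem IsCoupling.isProbabilityMeasure {γ : Measure (X × Y)} {μ : Measure X} {ν : Measure Y}
    [IsProbabilityMeasure μ] (hγ : IsCoupling γ μ ν) : IsProbabilityMeasure γ :=
  (Measure.isProbabilityMeasure_map_iff measurable_fst.aemeasurable).1 (hγ.1 ▸ ‹_›)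

end Coupling

theorem MeasureTheory.Measure.exists_gluing {S X Y : Type*} [MeasurableSpace S]
    [MeasurableSpace X] [StandardBorelSpace X] [Nonempty X]
    [MeasurableSpace Y] [StandardBorelSpace Y] [Nonempty Y]
    (γ₁ : Measure (S × X)) (γ₂ : Measure (S × Y)) [IsFiniteMeasure γ₁] [IsFiniteMeasure γ₂]
    (h : γ₁.fst = γ₂.fst) :
    ∃ ν : Measure (S × X × Y),
      ν.map (fun p => (p.1, p.2.1)) = γ₁ ∧ ν.map (fun p => (p.1, p.2.2)) = γ₂ := by
  refine ⟨γ₁.fst ⊗ₘ (γ₁.condKernel ×ₖ γ₂.condKernel), ?_, ?_⟩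
  · change Measure.map (Prod.map id Prod.fst) _ = _
    rw [← Measure.compProd_map measurable_fst, ← Kernel.fst_eq, Kernel.fst_prod,
      Measure.disintegrate]
  · change Measure.map (Prod.map id Prod.snd) _ = _
    rw [← Measure.compProd_map measurable_snd, ← Kernel.snd_eq, Kernel.snd_prod, h,
      Measure.disintegrate]

theorem exists_plan_of_isCoupling {S X₁ X₂ : Type*} [MeasurableSpace S]
    [MeasurableSpace X₁] [StandardBorelSpace X₁] [MeasurableSpace X₂] [StandardBorelSpace X₂]
    {σ : Measure S} {μ₁ : Measure X₁} {μ₂ : Measure X₂} [IsProbabilityMeasure σ]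
    {γ₁ : Measure (S × X₁)} {γ₂ : Measure (S × X₂)}
    (hγ₁ : IsCoupling γ₁ σ μ₁) (hγ₂ : IsCoupling γ₂ σ μ₂) :
    ∃ π : Measure (X₁ × X₂ × S), IsProbabilityMeasure π ∧
      IsCoupling (π.map fun p => (p.1, p.2.1)) μ₁ μ₂ ∧
      π.map (fun p => (p.2.2, p.1)) = γ₁ ∧ π.map (fun p => (p.2.2, p.2.1)) = γ₂ := by
  have := hγ₁.isProbabilityMeasure
  have := hγ₂.isProbabilityMeasure
  have : Nonempty X₁ := (nonempty_of_isProbabilityMeasure γ₁).map Prod.snd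
  have : Nonempty X₂ := (nonempty_of_isProbabilityMeasure γ₂).map Prod.snd
  obtain ⟨ν, hν₁, hν₂⟩ := γ₁.exists_gluing γ₂ (hγ₁.1.trans hγ₂.1.symm)
  have hrot : Measurable fun p : S × X₁ × X₂ => (p.2.1, p.2.2, p.1) := by fun_prop
  have : IsProbabilityMeasure ν :=
    (Measure.isProbabilityMeasure_map_iff (f := fun p : S × X₁ × X₂ => (p.1, p.2.1))
      (by fun_prop)).1 (hν₁ ▸ ‹_›)
  refine ⟨ν.map fun p => (p.2.1, p.2.2, p.1), Measure.isProbabilityMeasure_map hrot.aemeasurable,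
    ?_, ?_, ?_⟩
  · rw [Measure.map_map (by fun_prop) hrot, isCoupling_map_prodMk_iff (by fun_prop) (by fun_prop)]
    exact ⟨((isCoupling_map_prodMk_iff (by fun_prop) (by fun_prop)).1 (hν₁ ▸ hγ₁)).2,
      ((isCoupling_map_prodMk_iff (by fun_prop) (by fun_prop)).1 (hν₂ ▸ hγ₂)).2⟩
  · rw [Measure.map_map (by fun_prop) hrot]
    exact hν₁
  · rw [Measure.map_map (by fun_prop) hrot]
    exact hν₂

section GromovWasserstein

variable {X Y : Type*} [PseudoMetricSpace X] [PseudoMetricSpace Y]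
    [MeasurableSpace X] [MeasurableSpace Y] {μ : Measure X} {ν : Measure Y}

theorem gwCost_nonneg (γ : Measure (X × Y)) : 0 ≤ gwCost γ :=
  integral_nonneg fun _ => integral_nonneg fun _ => sq_nonneg _

theorem gwSq_le_gwCost {γ : Measure (X × Y)} (hγ : IsCoupling γ μ ν) : gwSq μ ν ≤ gwCost γ :=
  csInf_le ⟨0, by rintro _ ⟨γ', -, rfl⟩; exact gwCost_nonneg γ'⟩ ⟨γ, hγ, rfl⟩

theorem gwCost_map [SecondCountableTopology X] [SecondCountableTopology Y] [BorelSpace X]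
    [BorelSpace Y] {Z : Type*} [MeasurableSpace Z] (π : Measure Z) [SFinite π] {f : Z → X × Y}
    (hf : Measurable f) :
    gwCost (π.map f) = ∫ p, ∫ q, (dist (f p).1 (f q).1 - dist (f p).2 (f q).2) ^ 2 ∂π ∂π :=
  integral_integral_map π hf (c := fun z => (dist z.1.1 z.2.1 - dist z.1.2 z.2.2) ^ 2)
    (by fun_prop)

theorem le_mul_gwSq_of_forall [IsProbabilityMeasure μ] [IsProbabilityMeasure ν] {ρ c : ℝ}
    (hρ : 0 ≤ ρ) (h : ∀ γ, IsCoupling γ μ ν → c ≤ ρ * gwCost γ) : c ≤ ρ * gwSq μ ν := by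
  rw [gwSq, ← smul_eq_mul, ← Real.sInf_smul_of_nonneg hρ]
  refine le_csInf (Set.Nonempty.smul_set ⟨_, μ.prod ν, isCoupling_prod μ ν, rfl⟩) ?_
  rintro _ ⟨_, ⟨γ, hγ, rfl⟩, rfl⟩
  exact h γ hγ

end GromovWasserstein

theorem le_add_mul_gwSq_of_forall {S X₁ X₂ : Type*} [PseudoMetricSpace S] [PseudoMetricSpace X₁]
    [PseudoMetricSpace X₂] [MeasurableSpace S] [MeasurableSpace X₁] [MeasurableSpace X₂]
    {σ : Measure S} {μ₁ : Measure X₁} {μ₂ : Measure X₂} [IsProbabilityMeasure σ]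
    [IsProbabilityMeasure μ₁] [IsProbabilityMeasure μ₂] {ρ₁ ρ₂ c : ℝ} (hρ₁ : 0 ≤ ρ₁)
    (hρ₂ : 0 ≤ ρ₂) (h : ∀ γ₁ γ₂, IsCoupling γ₁ σ μ₁ → IsCoupling γ₂ σ μ₂ →
      c ≤ ρ₁ * gwCost γ₁ + ρ₂ * gwCost γ₂) :
    c ≤ ρ₁ * gwSq σ μ₁ + ρ₂ * gwSq σ μ₂ := by
  have h₁ : ∀ γ₂, IsCoupling γ₂ σ μ₂ → c - ρ₂ * gwCost γ₂ ≤ ρ₁ * gwSq σ μ₁ := fun γ₂ hγ₂ =>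
    le_mul_gwSq_of_forall hρ₁ fun γ₁ hγ₁ => by linarith [h γ₁ γ₂ hγ₁ hγ₂]
  have h₂ : c - ρ₁ * gwSq σ μ₁ ≤ ρ₂ * gwSq σ μ₂ :=
    le_mul_gwSq_of_forall hρ₂ fun γ₂ hγ₂ => by linarith [h₁ γ₂ hγ₂]
  linarith

section Barycenter

variable {X₁ X₂ S : Type*}

noncomputable def mmgwCost [PseudoMetricSpace X₁] [PseudoMetricSpace X₂] [PseudoMetricSpace S]
    [MeasurableSpace X₁] [MeasurableSpace X₂] [MeasurableSpace S]
    (ρ₁ ρ₂ : ℝ) (π : Measure (X₁ × X₂ × S)) : ℝ :=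
  ∫ p, ∫ q, (ρ₁ * (dist p.1 q.1 - dist p.2.2 q.2.2) ^ 2
    + ρ₂ * (dist p.2.1 q.2.1 - dist p.2.2 q.2.2) ^ 2) ∂π ∂π

variable [MetricSpace X₁] [CompactSpace X₁] [MeasurableSpace X₁] [BorelSpace X₁]
    [MetricSpace X₂] [CompactSpace X₂] [MeasurableSpace X₂] [BorelSpace X₂]
    [MetricSpace S] [CompactSpace S] [MeasurableSpace S] [BorelSpace S]

theorem mmgwCost_eq (ρ₁ ρ₂ : ℝ) (π : Measure (X₁ × X₂ × S)) [IsFiniteMeasure π] :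
    mmgwCost ρ₁ ρ₂ π = ρ₁ * gwCost (π.map fun p => (p.2.2, p.1))
      + ρ₂ * gwCost (π.map fun p => (p.2.2, p.2.1)) := by
  rw [gwCost_map π (by fun_prop), gwCost_map π (by fun_prop), mmgwCost,
    integral_integral_add π
      (F := fun z => ρ₁ * (dist z.1.1 z.2.1 - dist z.1.2.2 z.2.2.2) ^ 2)
      (G := fun z => ρ₂ * (dist z.1.2.1 z.2.2.1 - dist z.1.2.2 z.2.2.2) ^ 2)
      (by fun_prop) (by fun_prop)]
  simp only [integral_const_mul, sub_sq_comm (dist (_ : S) _)]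

end Barycenter

theorem fixed_support_barycenter_general
    {X₁ X₂ S : Type*}
    [MetricSpace X₁] [CompactSpace X₁] [MeasurableSpace X₁] [BorelSpace X₁]
    [MetricSpace X₂] [CompactSpace X₂] [MeasurableSpace X₂] [BorelSpace X₂]
    [MetricSpace S] [CompactSpace S] [MeasurableSpace S] [BorelSpace S]
    (μ₁ : Measure X₁) (μ₂ : Measure X₂)
    [IsProbabilityMeasure μ₁] [IsProbabilityMeasure μ₂]
    (ρ₁ ρ₂ : ℝ) (h₁ : 0 ≤ ρ₁) (h₂ : 0 ≤ ρ₂)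
    (πstar : Measure (X₁ × X₂ × S)) [IsProbabilityMeasure πstar]
    (hmarg : IsCoupling (πstar.map (fun p => (p.1, p.2.1))) μ₁ μ₂)
    (hopt : ∀ π : Measure (X₁ × X₂ × S), IsProbabilityMeasure π →
      IsCoupling (π.map (fun p => (p.1, p.2.1))) μ₁ μ₂ →
      (∫ p, ∫ q, (ρ₁ * (dist p.1 q.1 - dist p.2.2 q.2.2) ^ 2
          + ρ₂ * (dist p.2.1 q.2.1 - dist p.2.2 q.2.2) ^ 2) ∂πstar ∂πstar) ≤
      (∫ p, ∫ q, (ρ₁ * (dist p.1 q.1 - dist p.2.2 q.2.2) ^ 2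
          + ρ₂ * (dist p.2.1 q.2.1 - dist p.2.2 q.2.2) ^ 2) ∂π ∂π)) :
    ∀ σ : Measure S, IsProbabilityMeasure σ →
      ρ₁ * gwSq (πstar.map (fun p => p.2.2)) μ₁ + ρ₂ * gwSq (πstar.map (fun p => p.2.2)) μ₂
        ≤ ρ₁ * gwSq σ μ₁ + ρ₂ * gwSq σ μ₂ := by
  intro σ _
  obtain ⟨hπ₁, hπ₂⟩ := (isCoupling_map_prodMk_iff (by fun_prop) (by fun_prop)).1 hmarg
  have lower : ρ₁ * gwSq (πstar.map (fun p => p.2.2)) μ₁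
      + ρ₂ * gwSq (πstar.map (fun p => p.2.2)) μ₂ ≤ mmgwCost ρ₁ ρ₂ πstar := by
    rw [mmgwCost_eq]
    gcongr
    · exact gwSq_le_gwCost ((isCoupling_map_prodMk_iff (by fun_prop) (by fun_prop)).2 ⟨rfl, hπ₁⟩)
    · exact gwSq_le_gwCost ((isCoupling_map_prodMk_iff (by fun_prop) (by fun_prop)).2 ⟨rfl, hπ₂⟩)
  have upper : mmgwCost ρ₁ ρ₂ πstar ≤ ρ₁ * gwSq σ μ₁ + ρ₂ * gwSq σ μ₂ := by
    refine le_add_mul_gwSq_of_forall h₁ h₂ fun γ₁ γ₂ hγ₁ hγ₂ => ?_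
    obtain ⟨π, hπ, hπ_coupling, rfl, rfl⟩ := exists_plan_of_isCoupling hγ₁ hγ₂
    rw [← mmgwCost_eq]
    exact hopt π hπ hπ_coupling
  exact lower.trans upper

/-- fixed-support GW barycenter via unbalanced multi-marginal GW
(two-marginal case): the `S`-marginal of a minimizer of the three-plan problem minimizes
the fixed-support barycenter objective. -/
theorem fixed_support_barycenter
    {X₁ X₂ S : Type*}
    [MetricSpace X₁] [CompactSpace X₁] [MeasurableSpace X₁] [BorelSpace X₁]
    [MetricSpace X₂] [CompactSpace X₂] [MeasurableSpace X₂] [BorelSpace X₂]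
    [MetricSpace S] [CompactSpace S] [MeasurableSpace S] [BorelSpace S]
    (μ₁ : Measure X₁) (μ₂ : Measure X₂)
    [IsProbabilityMeasure μ₁] [IsProbabilityMeasure μ₂]
    (ρ₁ ρ₂ : ℝ) (h₁ : 0 ≤ ρ₁) (h₂ : 0 ≤ ρ₂) (hsum : ρ₁ + ρ₂ = 1)
    (πstar : Measure (X₁ × X₂ × S)) [IsProbabilityMeasure πstar]
    (hmarg : IsCoupling (πstar.map (fun p => (p.1, p.2.1))) μ₁ μ₂)
    (hopt : ∀ π : Measure (X₁ × X₂ × S), IsProbabilityMeasure π →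
      IsCoupling (π.map (fun p => (p.1, p.2.1))) μ₁ μ₂ →
      (∫ p, ∫ q, (ρ₁ * (dist p.1 q.1 - dist p.2.2 q.2.2) ^ 2
          + ρ₂ * (dist p.2.1 q.2.1 - dist p.2.2 q.2.2) ^ 2) ∂πstar ∂πstar) ≤
      (∫ p, ∫ q, (ρ₁ * (dist p.1 q.1 - dist p.2.2 q.2.2) ^ 2
          + ρ₂ * (dist p.2.1 q.2.1 - dist p.2.2 q.2.2) ^ 2) ∂π ∂π)) :
    ∀ σ : Measure S, IsProbabilityMeasure σ →
      ρ₁ * gwSq (πstar.map (fun p => p.2.2)) μ₁ + ρ₂ * gwSq (πstar.map (fun p => p.2.2)) μ₂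
        ≤ ρ₁ * gwSq σ μ₁ + ρ₂ * gwSq σ μ₂ :=
  fixed_support_barycenter_general μ₁ μ₂ ρ₁ ρ₂ h₁ h₂ πstar hmarg hopt
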